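/- An orientation of the edges of a planar diagram of a link is piecewise-natural if and only if at every vertex the edges alternate in-out-in-out around the vertex. -/
import Mathlib


/-- Combinatorial-map model of an oriented planar link diagram: `D` is the type
of darts, `α` the fixed-point-free edge involution, `σ` the rotation giving the
cyclic order of darts around each vertex, and `o d = true` iff the edge of dart
`d` points out of the vertex of `d` (so `o (α d) = !o d`).  The face
permutation is `φ = σ ∘ α`.  The orientation is piecewise-natural iff the
boundary of every face is a coherently directed cycle, i.e. `o` is constant
along each face orbit: `∀ d, o (σ (α d)) = o d`.  Claim: this holds iff around
every vertex the edges alternate in-out-in-out, i.e. consecutive darts in the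
rotation have opposite directions. -/
theorem stmt_3 (D : Type*) (α σ : Equiv.Perm D) (o : D → Bool)
    (hα : ∀ d, α (α d) = d) (hαfree : ∀ d, α d ≠ d)
    (ho : ∀ d, o (α d) = !o d) :
    (∀ d, o (σ (α d)) = o d) ↔ (∀ d, o (σ d) ≠ o d) := by
  constructor
  · intro h d
    have h1 := h (α d)
    rw [hα] at h1
    rw [h1, ho]
    cases o d <;> simp
  · intro h d
    have h1 := h (α d)
    rw [ho] at h1
    cases hd : o d <;> cases hsd : o (σ (α d)) <;> simp_all
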